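/- The map x ↦ γ̄(x) := ρ(|x|)·x/|x| (with γ̄(0) = 0), where ρ(r) = (1/(2π)) ∫₀^{2π} γ(r sin φ) sin φ dφ for a locally Lipschitz γ : ℝ → ℝ with γ(0) = 0, is locally Lipschitz on ℝ². -/

import Mathlib

open Real

noncomputable def rho (γ : ℝ → ℝ) (r : ℝ) : ℝ :=
  (1 / (2 * π)) * ∫ φ in (0:ℝ)..(2 * π), γ (r * Real.sin φ) * Real.sin φ

/-!
The integrand `γ (r sin φ) sin φ` is `K`-Lipschitz in `r` uniformly in `φ` wherever `γ` is,
so `ρ` is locally Lipschitz; and `ρ 0 = 0` because `∫₀^{2π} sin = 0`. For any locally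
Lipschitz `f` with `f 0 = 0` the radial map `F x = f ‖x‖ • ‖x‖⁻¹ • x` is then locally
Lipschitz: on `[0, R]` we have `|f r| ≤ K r`, and for `s = ‖y‖ ≤ r = ‖x‖` the splitting
`F x - F y = (f r / r) • (x - y) + (f r / r - f s / s) • y` gives `‖F x - F y‖ ≤ 3 K ‖x - y‖`.
-/

open Set Metric NNReal MeasureTheory

lemma rho_zero (γ : ℝ → ℝ) : rho γ 0 = 0 := by
  simp [rho, intervalIntegral.integral_const_mul]

lemma mul_sin_mem_Icc {r R : ℝ} (hr : r ∈ Icc (-R) R) (φ : ℝ) : r * sin φ ∈ Icc (-R) R := by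
  rw [mem_Icc, ← abs_le] at hr ⊢
  rw [abs_mul]
  exact (mul_le_of_le_one_right (abs_nonneg r) (abs_sin_le_one φ)).trans hr

lemma lipschitzOnWith_rho {γ : ℝ → ℝ} {K : ℝ≥0} {R : ℝ} (hγ : LipschitzOnWith K γ (Icc (-R) R)) :
    LipschitzOnWith K (rho γ) (Icc (-R) R) := by
  have hint : ∀ r ∈ Icc (-R) R,
      IntervalIntegrable (fun φ => γ (r * sin φ) * sin φ) volume 0 (2 * π) :=
    fun r hr => ((hγ.continuousOn.comp_continuous (by fun_prop) (mul_sin_mem_Icc hr)).mul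
      continuous_sin).intervalIntegrable _ _
  refine LipschitzOnWith.of_dist_le_mul fun r hr s hs => ?_
  have hpoint : ∀ φ, ‖γ (r * sin φ) * sin φ - γ (s * sin φ) * sin φ‖ ≤ K * dist r s := fun φ =>
    calc ‖γ (r * sin φ) * sin φ - γ (s * sin φ) * sin φ‖
        = dist (γ (r * sin φ)) (γ (s * sin φ)) * |sin φ| := by
          rw [← sub_mul, norm_mul, Real.dist_eq, Real.norm_eq_abs, Real.norm_eq_abs]
      _ ≤ K * dist (r * sin φ) (s * sin φ) * 1 :=
          mul_le_mul (hγ.dist_le_mul _ (mul_sin_mem_Icc hr φ) _ (mul_sin_mem_Icc hs φ))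
            (abs_sin_le_one φ) (abs_nonneg _) (by positivity)
      _ ≤ K * dist r s := by
          rw [mul_one, Real.dist_eq, Real.dist_eq, ← sub_mul, abs_mul]
          exact mul_le_mul_of_nonneg_left (mul_le_of_le_one_right (abs_nonneg _) (abs_sin_le_one φ))
            K.2
  calc dist (rho γ r) (rho γ s)
      = (1 / (2 * π)) *
          ‖∫ φ in (0:ℝ)..(2 * π), (γ (r * sin φ) * sin φ - γ (s * sin φ) * sin φ)‖ := by
        rw [rho, rho, Real.dist_eq, ← mul_sub,
          intervalIntegral.integral_sub (hint r hr) (hint s hs), abs_mul,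
          abs_of_pos (by positivity), Real.norm_eq_abs]
    _ ≤ (1 / (2 * π)) * (K * dist r s * |2 * π - 0|) :=
        mul_le_mul_of_nonneg_left
          (intervalIntegral.norm_integral_le_of_norm_le_const fun φ _ => hpoint φ) (by positivity)
    _ = K * dist r s := by
        rw [sub_zero, abs_of_pos (by positivity)]
        field_simp

lemma LocallyLipschitz.rho {γ : ℝ → ℝ} (hγ : LocallyLipschitz γ) : LocallyLipschitz (rho γ) := by
  intro r
  obtain ⟨K, hK⟩ := hγ.locallyLipschitzOn.exists_lipschitzOnWith_of_compact
    (isCompact_Icc (a := -(|r| + 1)) (b := |r| + 1))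
  refine ⟨K, Icc (-(|r| + 1)) (|r| + 1), Icc_mem_nhds ?_ ?_, lipschitzOnWith_rho hK⟩ <;>
    linarith [neg_abs_le r, le_abs_self r]

section Radial

variable {E : Type*} [NormedAddCommGroup E] [NormedSpace ℝ E] {f : ℝ → ℝ} {K : ℝ≥0} {R : ℝ}

lemma abs_le_mul_of_lipschitzOnWith_Icc (hf : LipschitzOnWith K f (Icc 0 R)) (h0 : f 0 = 0)
    {r : ℝ} (hr : r ∈ Icc 0 R) : |f r| ≤ K * r := by
  simpa [h0, Real.dist_eq, abs_of_nonneg hr.1] using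
    hf.dist_le_mul r hr 0 ⟨le_rfl, hr.1.trans hr.2⟩

lemma norm_radial_sub_radial_le (hf : LipschitzOnWith K f (Icc 0 R)) (h0 : f 0 = 0) {x y : E}
    (hyx : ‖y‖ ≤ ‖x‖) (hx : ‖x‖ ≤ R) :
    ‖f ‖x‖ • ‖x‖⁻¹ • x - f ‖y‖ • ‖y‖⁻¹ • y‖ ≤ 3 * K * ‖x - y‖ := by
  set r := ‖x‖
  set s := ‖y‖ with hs_def
  have hr : r ∈ Icc 0 R := ⟨norm_nonneg x, hx⟩
  have hs : s ∈ Icc 0 R := ⟨norm_nonneg y, hyx.trans hx⟩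
  have hrs : |r - s| ≤ ‖x - y‖ := abs_norm_sub_norm_le x y
  have hsplit : f r • r⁻¹ • x - f s • s⁻¹ • y = (f r / r) • (x - y) + (f r / r - f s / s) • y := by
    simp only [smul_smul, div_eq_mul_inv]
    module
  have hterm_xy : ‖(f r / r) • (x - y)‖ ≤ K * ‖x - y‖ := by
    rw [norm_smul, Real.norm_eq_abs, abs_div, abs_of_nonneg hr.1]
    exact mul_le_mul_of_nonneg_right
      (div_le_of_le_mul₀ hr.1 K.2 (abs_le_mul_of_lipschitzOnWith_Icc hf h0 hr)) (norm_nonneg _)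
  have hterm_y : ‖(f r / r - f s / s) • y‖ ≤ 2 * K * ‖x - y‖ := by
    rw [norm_smul, Real.norm_eq_abs, ← hs_def]
    rcases hs.1.eq_or_lt with hs0 | hs0
    · rw [← hs0, mul_zero]
      positivity
    have hr0 : 0 < r := hs0.trans_le hyx
    have hfs := abs_le_mul_of_lipschitzOnWith_Icc hf h0 hs
    have hfrs : |f r - f s| ≤ K * |r - s| := by
      simpa only [Real.dist_eq] using hf.dist_le_mul r hr s hs
    calc |f r / r - f s / s| * s
        = |(f r / r - f s / s) * s| := by rw [abs_mul, abs_of_pos hs0]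
      _ = |s * (f r - f s) + (s - r) * f s| / r := by
          rw [← abs_of_pos hr0, ← abs_div, abs_of_pos hr0]
          congr 1
          field_simp
          ring
      _ ≤ (s * (K * |r - s|) + |r - s| * (K * s)) / r := by
          gcongr
          refine (abs_add_le _ _).trans ?_
          rw [abs_mul, abs_mul, abs_of_nonneg hs.1, abs_sub_comm s r]
          gcongr
      _ ≤ 2 * K * |r - s| := by
          rw [div_le_iff₀ hr0]
          linarith [mul_le_mul_of_nonneg_left hyx (mul_nonneg K.coe_nonneg (abs_nonneg (r - s)))]
      _ ≤ 2 * K * ‖x - y‖ := by gcongr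
  calc ‖f r • r⁻¹ • x - f s • s⁻¹ • y‖
      ≤ ‖(f r / r) • (x - y)‖ + ‖(f r / r - f s / s) • y‖ := hsplit ▸ norm_add_le _ _
    _ ≤ 3 * K * ‖x - y‖ := by linarith

lemma lipschitzOnWith_radial (hf : LipschitzOnWith K f (Icc 0 R)) (h0 : f 0 = 0) :
    LipschitzOnWith (3 * K) (fun x : E => f ‖x‖ • ‖x‖⁻¹ • x) (closedBall 0 R) := by
  refine LipschitzOnWith.of_dist_le_mul fun x hx y hy => ?_
  rw [mem_closedBall_zero_iff] at hx hy
  rw [dist_eq_norm, dist_eq_norm]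
  push_cast
  rcases le_total ‖y‖ ‖x‖ with h | h
  · exact norm_radial_sub_radial_le hf h0 h hx
  · rw [norm_sub_rev, norm_sub_rev x]
    exact norm_radial_sub_radial_le hf h0 h hy

lemma LocallyLipschitz.radial (hf : LocallyLipschitz f) (h0 : f 0 = 0) :
    LocallyLipschitz (fun x : E => f ‖x‖ • ‖x‖⁻¹ • x) := by
  intro x
  obtain ⟨K, hK⟩ := hf.locallyLipschitzOn.exists_lipschitzOnWith_of_compact
    (isCompact_Icc (a := 0) (b := ‖x‖ + 1))
  exact ⟨3 * K, closedBall 0 (‖x‖ + 1), closedBall_mem_nhds_of_mem (by simp),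
    lipschitzOnWith_radial hK h0⟩

end Radial

theorem stmt_11_general (γ : ℝ → ℝ) (hγ : LocallyLipschitz γ) :
    LocallyLipschitz (fun x : EuclideanSpace ℝ (Fin 2) => rho γ ‖x‖ • ‖x‖⁻¹ • x) :=
  hγ.rho.radial (rho_zero γ)

theorem stmt_11 (γ : ℝ → ℝ) (hγ : LocallyLipschitz γ) (h0 : γ 0 = 0) :
    LocallyLipschitz (fun x : EuclideanSpace ℝ (Fin 2) => rho γ ‖x‖ • ‖x‖⁻¹ • x) :=
  stmt_11_general γ hγ
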